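/- arXiv:2206.02242 — 6 statements merged into one kernel-verified Lean document; each statement's English description precedes it below -/
import Mathlib

section
/- There exists ε₀ > 0 such that for every 0 < ε < ε₀ the following holds. Let (X, F_X, ν_X) and (Y, F_Y, ν_Y) be probability spaces and let θ : X → Y be a bi-measurable bijection with θ_*ν_X = ν_Y. Let μ_X and μ_Y be probability measures on X and Y equivalent to ν_X and ν_Y respectively, with densities ρ_X = dμ_X/dν_X and ρ_Y = dμ_Y/dν_Y. Set E_X = {x ∈ X : |ρ_X(x) − 1| < ε} and E_Y = {y ∈ Y : |ρ_Y(y) − 1| < ε}. If μ_X(E_X) ≥ 1 − ε and ν_Y(E_Y) ≥ 1 − ε, then the map θ, viewed as a map from (X, μ_X) to (Y, μ_Y), is 5ε-measure preserving. -/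
/-! Off the bad set `E = E_Xᶜ ∪ θ⁻¹(E_Yᶜ)` both densities are `ε`-close to `1`, so `μ_X S` and
`μ_Y (θ S)` are each within a factor `1 ± ε` of the common value `ν_X S = ν_Y (θ S)`, and the
ratio `(1 + ε) / (1 - ε)` is below `1 + 5ε` for small `ε`. The bad set is small because
`μ_X (E_Xᶜ) ≤ ε`, while on `E_X` the measure `μ_X` is at most `(1 + ε) ν_X` and
`ν_X (θ⁻¹ E_Yᶜ) = ν_Y (E_Yᶜ) ≤ ε`. -/

open MeasureTheory

/-- A (bi-measurable) map `θ : (X, μ) → (Y, ν)` is `ε`-measure preserving if there is a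
measurable set `E ⊆ X` with `μ E < ε` such that for every measurable `S ⊆ X \ E` one has
`(1 - ε) · ν (θ '' S) ≤ μ S ≤ (1 + ε) · ν (θ '' S)`. -/
def EpsMeasurePreserving {X Y : Type*} [MeasurableSpace X] [MeasurableSpace Y]
    (μ : Measure X) (ν : Measure Y) (θ : X → Y) (ε : ℝ) : Prop :=
  ∃ E : Set X, MeasurableSet E ∧ μ E < ENNReal.ofReal ε ∧
    ∀ S : Set X, MeasurableSet S → S ⊆ Eᶜ →
      ENNReal.ofReal (1 - ε) * ν (θ '' S) ≤ μ S ∧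
        μ S ≤ ENNReal.ofReal (1 + ε) * ν (θ '' S)

open ENNReal

def RelClose (ε : ℝ) (a b : ℝ≥0∞) : Prop :=
  ENNReal.ofReal (1 - ε) * b ≤ a ∧ a ≤ ENNReal.ofReal (1 + ε) * b

lemma relClose_one_of_abs_toReal_sub_one_lt {ε : ℝ} (hε : ε ≤ 1) {r : ℝ≥0∞}
    (hr : |r.toReal - 1| < ε) : RelClose ε r 1 := by
  obtain ⟨hlo, hhi⟩ := abs_lt.mp hr
  have hr_ne_top : r ≠ ∞ := by
    rintro rfl
    simp only [toReal_top] at hlo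
    linarith
  rw [RelClose, mul_one, mul_one, ← ofReal_toReal hr_ne_top]
  constructor <;> apply ofReal_le_ofReal <;> linarith

/-- The constant `5` comes from `(1 + ε) / (1 - ε) ≤ 1 + 5ε` for `0 ≤ ε ≤ 3/5`. -/
lemma RelClose.of_common {ε : ℝ} {a b c : ℝ≥0∞} (hab : RelClose ε a b) (hcb : RelClose ε c b)
    (hε₀ : 0 ≤ ε) (hε₁ : ε ≤ 3 / 5) : RelClose (5 * ε) a c := by
  constructor
  · calc ENNReal.ofReal (1 - 5 * ε) * c
        ≤ ENNReal.ofReal (1 - 5 * ε) * (ENNReal.ofReal (1 + ε) * b) := by gcongr; exact hcb.2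
      _ = ENNReal.ofReal ((1 - 5 * ε) * (1 + ε)) * b := by
          rw [← mul_assoc, ← ofReal_mul' (by linarith)]
      _ ≤ ENNReal.ofReal (1 - ε) * b := by gcongr; nlinarith
      _ ≤ a := hab.1
  · calc a ≤ ENNReal.ofReal (1 + ε) * b := hab.2
      _ ≤ ENNReal.ofReal ((1 + 5 * ε) * (1 - ε)) * b := by gcongr; nlinarith
      _ = ENNReal.ofReal (1 + 5 * ε) * (ENNReal.ofReal (1 - ε) * b) := by
          rw [← mul_assoc, ← ofReal_mul (by linarith)]
      _ ≤ ENNReal.ofReal (1 + 5 * ε) * c := by gcongr; exact hcb.1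

lemma relClose_setLIntegral {X : Type*} [MeasurableSpace X] {ν : Measure X} {f : X → ℝ≥0∞}
    {ε : ℝ} {S : Set X} (hS : MeasurableSet S) (hf : ∀ x ∈ S, RelClose ε (f x) 1) :
    RelClose ε (∫⁻ x in S, f x ∂ν) (ν S) := by
  constructor
  · calc ENNReal.ofReal (1 - ε) * ν S = ∫⁻ _ in S, ENNReal.ofReal (1 - ε) ∂ν :=
          (setLIntegral_const _ _).symm
      _ ≤ ∫⁻ x in S, f x ∂ν := setLIntegral_mono' hS fun x hx => by
          simpa only [mul_one] using (hf x hx).1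
  · calc ∫⁻ x in S, f x ∂ν ≤ ∫⁻ _ in S, ENNReal.ofReal (1 + ε) ∂ν :=
          setLIntegral_mono' hS fun x hx => by simpa only [mul_one] using (hf x hx).2
      _ = ENNReal.ofReal (1 + ε) * ν S := setLIntegral_const _ _

section rnDerivNearOne

variable {X : Type*} [MeasurableSpace X] (μ ν : Measure X)

def rnDerivNearOne (ε : ℝ) : Set X := {x | |(μ.rnDeriv ν x).toReal - 1| < ε}

lemma measurableSet_rnDerivNearOne (ε : ℝ) : MeasurableSet (rnDerivNearOne μ ν ε) :=
  measurableSet_lt (((μ.measurable_rnDeriv ν).ennreal_toReal.sub measurable_const).abs)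
    measurable_const

variable {μ ν}

lemma relClose_of_subset_rnDerivNearOne [μ.HaveLebesgueDecomposition ν] (hμν : μ ≪ ν)
    {ε : ℝ} (hε : ε ≤ 1) {S : Set X} (hS : MeasurableSet S) (hSsub : S ⊆ rnDerivNearOne μ ν ε) :
    RelClose ε (μ S) (ν S) := by
  rw [← Measure.setLIntegral_rnDeriv' hμν hS]
  exact relClose_setLIntegral hS fun x hx => relClose_one_of_abs_toReal_sub_one_lt hε (hSsub hx)

lemma measure_compl_rnDerivNearOne_union_le [μ.HaveLebesgueDecomposition ν] (hμν : μ ≪ ν)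
    {ε : ℝ} (hε : ε ≤ 1) {B : Set X} (hB : MeasurableSet B) :
    μ ((rnDerivNearOne μ ν ε)ᶜ ∪ B) ≤
      μ (rnDerivNearOne μ ν ε)ᶜ + ENNReal.ofReal (1 + ε) * ν B := by
  set A := rnDerivNearOne μ ν ε
  have hA := measurableSet_rnDerivNearOne μ ν ε
  calc μ (Aᶜ ∪ B) ≤ μ (Aᶜ ∪ (A ∩ B)) := measure_mono fun x hx => by
        grind
    _ ≤ μ Aᶜ + μ (A ∩ B) := measure_union_le _ _
    _ ≤ μ Aᶜ + ENNReal.ofReal (1 + ε) * ν (A ∩ B) := by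
        gcongr
        exact (relClose_of_subset_rnDerivNearOne hμν hε (hA.inter hB) Set.inter_subset_left).2
    _ ≤ μ Aᶜ + ENNReal.ofReal (1 + ε) * ν B := by gcongr; exact Set.inter_subset_right

end rnDerivNearOne

lemma prob_compl_le_ofReal {X : Type*} [MeasurableSpace X] {μ : Measure X}
    [IsProbabilityMeasure μ] {s : Set X} (hs : MeasurableSet s) {ε : ℝ}
    (h : ENNReal.ofReal (1 - ε) ≤ μ s) : μ sᶜ ≤ ENNReal.ofReal ε := by
  rw [prob_compl_eq_one_sub hs, tsub_le_iff_right]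
  calc (1 : ℝ≥0∞) = ENNReal.ofReal (ε + (1 - ε)) := by simp
    _ ≤ ENNReal.ofReal ε + ENNReal.ofReal (1 - ε) := ofReal_add_le
    _ ≤ ENNReal.ofReal ε + μ s := by gcongr

/-- There is `ε₀ > 0` such that for all `0 < ε < ε₀`: if `θ` is a
bi-measurable bijection of probability spaces pushing `ν_X` to `ν_Y`, `μ_X ~ ν_X` and
`μ_Y ~ ν_Y` are probability measures whose densities are `ε`-close to `1` on sets
`E_X`, `E_Y` with `μ_X E_X ≥ 1 - ε` and `ν_Y E_Y ≥ 1 - ε`, then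
`θ : (X, μ_X) → (Y, μ_Y)` is `5ε`-measure preserving. -/
theorem epsMeasurePreserving_of_density_close :
    ∃ ε₀ : ℝ, 0 < ε₀ ∧
      ∀ ε : ℝ, 0 < ε → ε < ε₀ →
        ∀ (X : Type u) (Y : Type v) [MeasurableSpace X] [MeasurableSpace Y]
          (νX : Measure X) (νY : Measure Y),
          IsProbabilityMeasure νX → IsProbabilityMeasure νY →
          ∀ θ : X ≃ᵐ Y, Measure.map θ νX = νY →
          ∀ (μX : Measure X) (μY : Measure Y),
            IsProbabilityMeasure μX → IsProbabilityMeasure μY →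
            μX ≪ νX → νX ≪ μX → μY ≪ νY → νY ≪ μY →
            ENNReal.ofReal (1 - ε) ≤ μX {x | |(μX.rnDeriv νX x).toReal - 1| < ε} →
            ENNReal.ofReal (1 - ε) ≤ νY {y | |(μY.rnDeriv νY y).toReal - 1| < ε} →
            EpsMeasurePreserving μX μY θ (5 * ε) := by
  refine ⟨1 / 2, by norm_num, ?_⟩
  intro ε hε hε' X Y _ _ νX νY _ _ θ hθ μX μY _ _ hX _ hY _ hμA hνB
  set A := rnDerivNearOne μX νX ε
  set B := rnDerivNearOne μY νY ε
  have hAm := measurableSet_rnDerivNearOne μX νX ε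
  have hBm := measurableSet_rnDerivNearOne μY νY ε
  have hAc : μX Aᶜ ≤ ENNReal.ofReal ε := prob_compl_le_ofReal hAm hμA
  have hBc : νY Bᶜ ≤ ENNReal.ofReal ε := prob_compl_le_ofReal hBm hνB
  have hνθ (T : Set Y) : νX (θ ⁻¹' T) = νY T := by rw [← θ.map_apply, hθ]
  refine ⟨Aᶜ ∪ θ ⁻¹' Bᶜ, hAm.compl.union (θ.measurable hBm.compl), ?_, fun S hS hSE => ?_⟩
  · calc μX (Aᶜ ∪ θ ⁻¹' Bᶜ) ≤ μX Aᶜ + ENNReal.ofReal (1 + ε) * νX (θ ⁻¹' Bᶜ) :=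
          measure_compl_rnDerivNearOne_union_le hX (by linarith) (θ.measurable hBm.compl)
      _ ≤ ENNReal.ofReal ε + ENNReal.ofReal (1 + ε) * ENNReal.ofReal ε := by
          rw [hνθ]; gcongr
      _ = ENNReal.ofReal (ε + (1 + ε) * ε) := by
          rw [ofReal_add hε.le (by positivity), ofReal_mul (by linarith)]
      _ < ENNReal.ofReal (5 * ε) := by rw [ofReal_lt_ofReal_iff (by positivity)]; nlinarith
  · have hSA : S ⊆ A := fun x hx => by grind
    have hθSB : θ '' S ⊆ B := by rintro _ ⟨x, hx, rfl⟩; grind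
    have hθS : νY (θ '' S) = νX S := by rw [← hνθ, θ.preimage_image]
    have hY' := relClose_of_subset_rnDerivNearOne hY (by linarith)
      (θ.measurableSet_image.mpr hS) hθSB
    rw [hθS] at hY'
    exact (relClose_of_subset_rnDerivNearOne hX (by linarith) hS hSA).of_common hY' hε.le
      (by linarith)
end

section
/- There exist a universal constant C > 0 and ε₀ > 0 such that for every 0 < ε < ε₀ the following holds. Let (X, F, μ) be a probability space, let R_1, …, R_m be a finite measurable partition of X, and let A ∈ F with μ(A) > 0 be such that |μ(R_i)/μ_A(R_i) − 1| < ε for every i = 1, …, m (in particular μ_A(R_i) > 0). Suppose that for each i there is an injective bi-measurable map θ_i : A ∩ R_i → R_i, and that the union of those atoms R_i for which θ_i is NOT ε-measure preserving with respect to the measures μ_{A∩R_i} and μ_{R_i} has μ-measure less than ε. Then the map θ : A → X defined by θ|_{A∩R_i} = θ_i is Cε-measure preserving with respect to the measures μ_A and μ. -/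
/-!
On each good atom `Rᵢ` the map `θᵢ` is `ε`-measure preserving between `μ_{A ∩ Rᵢ}` and `μ_{Rᵢ}`,
and `μ_A = μ_A(Rᵢ) · μ_{A ∩ Rᵢ}` on `A ∩ Rᵢ` while `μ = μ(Rᵢ) · μ_{Rᵢ}` on `Rᵢ`. Since
`μ(Rᵢ)/μ_A(Rᵢ) ∈ (1 - ε, 1 + ε)`, the glued map distorts `μ_A` against `μ` by a factor
`(1 ± ε)/(1 ∓ ε)`, i.e. by at most `1 ± 3ε` when `ε ≤ 1/3`, and summing over the atoms gives the
same bound for every set. The exceptional set consists of `Aᶜ`, the bad atoms (of `μ_A`-measure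
at most `2ε`, as `μ_A(Rᵢ) ≤ 2 μ(Rᵢ)`) and the exceptional sets of the good atoms (of total
`μ_A`-measure at most `ε`).
-/

open MeasureTheory ProbabilityTheory

open Function Set

section

variable {X ι : Type*} [MeasurableSpace X] [Countable ι] {μ ν : Measure X} {T U : ι → Set X}
  {c : ENNReal}

theorem measure_iUnion_le_mul_measure_iUnion (hU : Pairwise (Disjoint on U))
    (hUm : ∀ i, MeasurableSet (U i)) (h : ∀ i, ν (T i) ≤ c * μ (U i)) :
    ν (⋃ i, T i) ≤ c * μ (⋃ i, U i) :=
  calc ν (⋃ i, T i) ≤ ∑' i, ν (T i) := measure_iUnion_le T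
    _ ≤ ∑' i, c * μ (U i) := ENNReal.tsum_le_tsum h
    _ = c * μ (⋃ i, U i) := by rw [ENNReal.tsum_mul_left, measure_iUnion hU hUm]

theorem mul_measure_iUnion_le_measure_iUnion (hT : Pairwise (Disjoint on T))
    (hTm : ∀ i, MeasurableSet (T i)) (h : ∀ i, c * μ (U i) ≤ ν (T i)) :
    c * μ (⋃ i, U i) ≤ ν (⋃ i, T i) :=
  calc c * μ (⋃ i, U i) ≤ c * ∑' i, μ (U i) := by gcongr; exact measure_iUnion_le U
    _ = ∑' i, c * μ (U i) := ENNReal.tsum_mul_left.symm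
    _ ≤ ∑' i, ν (T i) := ENNReal.tsum_le_tsum h
    _ = ν (⋃ i, T i) := (measure_iUnion hT hTm).symm

end

namespace ENNReal

theorem ofReal_one_sub_mul_le_and_le_ofReal_one_add_mul {a b : ENNReal} {ε : ℝ} (ha : a ≠ ⊤)
    (hb₀ : b ≠ 0) (hb : b ≠ ⊤) (h : |a.toReal / b.toReal - 1| < ε) :
    ENNReal.ofReal (1 - ε) * b ≤ a ∧ a ≤ ENNReal.ofReal (1 + ε) * b := by
  have hb_pos : 0 < b.toReal := toReal_pos hb₀ hb
  obtain ⟨hlo, hhi⟩ := abs_sub_lt_iff.mp h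
  rw [← ofReal_toReal ha, ← ofReal_toReal hb, ← ofReal_mul' hb_pos.le,
    ← ofReal_mul' hb_pos.le]
  constructor <;> apply ofReal_le_ofReal
  · linarith [(lt_div_iff₀ hb_pos).mp (by linarith : 1 - ε < a.toReal / b.toReal)]
  · linarith [(div_lt_iff₀ hb_pos).mp (by linarith : a.toReal / b.toReal < 1 + ε)]

theorem le_two_mul_of_ofReal_one_sub_mul_le {a r : ENNReal} {ε : ℝ} (hε : ε ≤ 1 / 2)
    (h : ENNReal.ofReal (1 - ε) * a ≤ r) : a ≤ 2 * r :=
  calc a ≤ ENNReal.ofReal (2 * (1 - ε)) * a := by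
        apply le_mul_of_one_le_left'
        rw [← ofReal_one]; exact ofReal_le_ofReal (by linarith)
    _ ≤ 2 * r := by
        rw [ofReal_mul zero_le_two, ofReal_ofNat, mul_assoc]; gcongr

theorem mul_le_ofReal_one_add_three_mul {a r s u : ENNReal} {ε : ℝ} (hε₀ : 0 ≤ ε)
    (hε : ε ≤ 1 / 3) (hs : s ≤ ENNReal.ofReal (1 + ε) * u) (ha : ENNReal.ofReal (1 - ε) * a ≤ r) :
    a * s ≤ ENNReal.ofReal (1 + 3 * ε) * (r * u) :=
  have hfactor :
      ENNReal.ofReal (1 + ε) ≤ ENNReal.ofReal (1 + 3 * ε) * ENNReal.ofReal (1 - ε) := by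
    rw [← ofReal_mul (by linarith)]; exact ofReal_le_ofReal (by nlinarith)
  calc a * s ≤ a * (ENNReal.ofReal (1 + 3 * ε) * ENNReal.ofReal (1 - ε) * u) :=
        mul_le_mul_right (hs.trans (by gcongr)) a
    _ = ENNReal.ofReal (1 + 3 * ε) * (ENNReal.ofReal (1 - ε) * a * u) := by ring
    _ ≤ ENNReal.ofReal (1 + 3 * ε) * (r * u) := by gcongr

theorem ofReal_one_sub_three_mul_le_mul {a r s u : ENNReal} {ε : ℝ} (hε₀ : 0 ≤ ε)
    (hs : ENNReal.ofReal (1 - ε) * u ≤ s) (hr : r ≤ ENNReal.ofReal (1 + ε) * a) :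
    ENNReal.ofReal (1 - 3 * ε) * (r * u) ≤ a * s :=
  have hfactor :
      ENNReal.ofReal (1 - 3 * ε) * ENNReal.ofReal (1 + ε) ≤ ENNReal.ofReal (1 - ε) := by
    rw [← ofReal_mul' (by linarith)]; exact ofReal_le_ofReal (by nlinarith)
  calc ENNReal.ofReal (1 - 3 * ε) * (r * u)
      ≤ ENNReal.ofReal (1 - 3 * ε) * (ENNReal.ofReal (1 + ε) * a * u) := by gcongr
    _ = ENNReal.ofReal (1 - 3 * ε) * ENNReal.ofReal (1 + ε) * (a * u) := by ring
    _ ≤ ENNReal.ofReal (1 - ε) * (a * u) := by gcongr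
    _ = a * (ENNReal.ofReal (1 - ε) * u) := by ring
    _ ≤ a * s := by gcongr

end ENNReal

section

variable {X : Type*} [MeasurableSpace X] {μ : Measure X} [IsFiniteMeasure μ] {A : Set X}
  {ε : ℝ}

theorem cond_inter_eq_cond_inter_mul_cond {R : Set X} (hA : MeasurableSet A)
    (hR : MeasurableSet R) (F : Set X) : μ[R ∩ F|A] = μ[F|A ∩ R] * μ[R|A] := by
  rw [← cond_cond_eq_cond_inter hA hR, cond_mul_eq_inter hR]

theorem cond_bounds_of_cond_inter_bounds {R T U : Set X} (hA : MeasurableSet A)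
    (hR : MeasurableSet R) (hε₀ : 0 ≤ ε) (hε : ε ≤ 1 / 3)
    (hratio : ENNReal.ofReal (1 - ε) * μ[R|A] ≤ μ R ∧ μ R ≤ ENNReal.ofReal (1 + ε) * μ[R|A])
    (hT : T ⊆ A ∩ R) (hU : U ⊆ R)
    (hTU : ENNReal.ofReal (1 - ε) * μ[U|R] ≤ μ[T|A ∩ R] ∧
      μ[T|A ∩ R] ≤ ENNReal.ofReal (1 + ε) * μ[U|R]) :
    ENNReal.ofReal (1 - 3 * ε) * μ U ≤ μ[T|A] ∧ μ[T|A] ≤ ENNReal.ofReal (1 + 3 * ε) * μ U := by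
  have hT_eq : μ[T|A] = μ[R|A] * μ[T|A ∩ R] := by
    rw [← inter_eq_right.2 (hT.trans inter_subset_right), cond_inter_eq_cond_inter_mul_cond hA hR,
      inter_eq_right.2 (hT.trans inter_subset_right), mul_comm]
  have hU_eq : μ U = μ R * μ[U|R] := by rw [mul_comm, cond_mul_eq_inter hR, inter_eq_right.2 hU]
  rw [hT_eq, hU_eq]
  exact ⟨ENNReal.ofReal_one_sub_three_mul_le_mul hε₀ hTU.1 hratio.2,
    ENNReal.mul_le_ofReal_one_add_three_mul hε₀ hε hTU.2 hratio.1⟩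

variable {ι : Type*} [Countable ι] {R : ι → Set X}

theorem cond_exceptional_lt {I : Set ι} {F : ι → Set X} (hA : MeasurableSet A)
    (hR : ∀ i, MeasurableSet (R i)) (hdisj : Pairwise (Disjoint on R)) (hε₀ : 0 ≤ ε)
    (hε : ε ≤ 1 / 2)
    (hratio : ∀ i, ENNReal.ofReal (1 - ε) * μ[R i|A] ≤ μ (R i))
    (hF : ∀ i, μ[F i|A ∩ R i] ≤ ENNReal.ofReal ε) (hbad : μ (⋃ i ∈ I, R i) < ENNReal.ofReal ε) :
    μ[Aᶜ ∪ (⋃ i ∈ I, R i) ∪ ⋃ i, R i ∩ F i|A] < ENNReal.ofReal (3 * ε) := by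
  have hcompl : μ[Aᶜ|A] = 0 := by rw [cond_apply hA, inter_compl_self, measure_empty, mul_zero]
  have hbad_le : μ[⋃ i ∈ I, R i|A] ≤ 2 * μ (⋃ i ∈ I, R i) := by
    rw [biUnion_eq_iUnion]
    exact measure_iUnion_le_mul_measure_iUnion (hdisj.comp_of_injective Subtype.val_injective)
      (fun i => hR i) fun i => ENNReal.le_two_mul_of_ofReal_one_sub_mul_le hε (hratio i)
  have hF_le : μ[⋃ i, R i ∩ F i|A] ≤ ENNReal.ofReal ε :=
    calc μ[⋃ i, R i ∩ F i|A] ≤ ENNReal.ofReal ε * μ[⋃ i, R i|A] := by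
          refine measure_iUnion_le_mul_measure_iUnion hdisj hR fun i => ?_
          rw [cond_inter_eq_cond_inter_mul_cond hA (hR i)]
          gcongr
          exact hF i
      _ ≤ ENNReal.ofReal ε := mul_le_of_le_one_right' prob_le_one
  calc μ[Aᶜ ∪ (⋃ i ∈ I, R i) ∪ ⋃ i, R i ∩ F i|A]
      ≤ μ[Aᶜ|A] + μ[⋃ i ∈ I, R i|A] + μ[⋃ i, R i ∩ F i|A] :=
        (measure_union_le _ _).trans (by gcongr; exact measure_union_le _ _)
    _ ≤ 2 * μ (⋃ i ∈ I, R i) + ENNReal.ofReal ε := by rw [hcompl, zero_add]; gcongr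
    _ < 2 * ENNReal.ofReal ε + ENNReal.ofReal ε := by
        gcongr
        exacts [ENNReal.ofReal_ne_top, ENNReal.ofNat_ne_top]
    _ = ENNReal.ofReal (3 * ε) := by
        rw [← ENNReal.ofReal_ofNat 2, ← ENNReal.ofReal_mul zero_le_two,
          ← ENNReal.ofReal_add (by positivity) hε₀]
        ring_nf

theorem EpsMeasurePreserving.glue {θi : ι → X → X} {θ : X → X} (hε₀ : 0 ≤ ε) (hε : ε ≤ 1 / 3)
    (hA : MeasurableSet A) (hR : ∀ i, MeasurableSet (R i)) (hdisj : Pairwise (Disjoint on R))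
    (hcover : ⋃ i, R i = univ)
    (hratio : ∀ i, ENNReal.ofReal (1 - ε) * μ[R i|A] ≤ μ (R i) ∧
      μ (R i) ≤ ENNReal.ofReal (1 + ε) * μ[R i|A])
    (hmaps : ∀ i, MapsTo (θi i) (A ∩ R i) (R i))
    (himage : ∀ i S, MeasurableSet S → MeasurableSet (θi i '' S))
    (hbad : μ (⋃ i ∈ {i | ¬ EpsMeasurePreserving μ[|A ∩ R i] μ[|R i] (θi i) ε}, R i)
      < ENNReal.ofReal ε)
    (hθ : ∀ i, ∀ x ∈ A ∩ R i, θ x = θi i x) :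
    EpsMeasurePreserving μ[|A] μ θ (3 * ε) := by
  set I := {i | ¬ EpsMeasurePreserving μ[|A ∩ R i] μ[|R i] (θi i) ε}
  have hF : ∀ i, ∃ F, MeasurableSet F ∧ μ[F|A ∩ R i] ≤ ENNReal.ofReal ε ∧
      (i ∉ I → ∀ S, MeasurableSet S → S ⊆ Fᶜ →
        ENNReal.ofReal (1 - ε) * μ[θi i '' S|R i] ≤ μ[S|A ∩ R i] ∧
          μ[S|A ∩ R i] ≤ ENNReal.ofReal (1 + ε) * μ[θi i '' S|R i]) := by
    intro i
    by_cases hi : i ∈ I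
    · exact ⟨∅, .empty, by simp, fun h => (h hi).elim⟩
    · obtain ⟨F, hFm, hFε, hFS⟩ := not_not.1 hi
      exact ⟨F, hFm, hFε.le, fun _ => hFS⟩
  choose F hFm hFε hFS using hF
  refine ⟨Aᶜ ∪ (⋃ i ∈ I, R i) ∪ ⋃ i, R i ∩ F i,
    (hA.compl.union (.biUnion I.to_countable fun i _ => hR i)).union
      (.iUnion fun i => (hR i).inter (hFm i)),
    cond_exceptional_lt hA hR hdisj hε₀ (by linarith) (fun i => (hratio i).1) hFε hbad,
    fun S hS hSE => ?_⟩
  have hSA : S ⊆ A := fun x hx => by_contra fun hxA => hSE hx (.inl (.inl hxA))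
  have hSR : ∀ i, S ∩ R i ⊆ A ∩ R i := fun i => inter_subset_inter_left _ hSA
  have hpiece : ∀ i, ENNReal.ofReal (1 - 3 * ε) * μ (θi i '' (S ∩ R i)) ≤ μ[S ∩ R i|A] ∧
      μ[S ∩ R i|A] ≤ ENNReal.ofReal (1 + 3 * ε) * μ (θi i '' (S ∩ R i)) := by
    intro i
    by_cases hi : i ∈ I
    · have hempty : S ∩ R i = ∅ := eq_empty_of_forall_notMem fun x hx =>
        hSE hx.1 (.inl (.inr (mem_biUnion hi hx.2)))
      simp [hempty]
    · refine cond_bounds_of_cond_inter_bounds hA (hR i) hε₀ hε (hratio i) (hSR i)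
        ((image_mono (hSR i)).trans (hmaps i).image_subset) (hFS i hi _ (hS.inter (hR i)) ?_)
      exact fun x hx hxF => hSE hx.1 (.inr (mem_iUnion.2 ⟨i, hx.2, hxF⟩))
  have hS_eq : μ[S|A] = μ[⋃ i, S ∩ R i|A] := by rw [← inter_iUnion, hcover, inter_univ]
  have hθS : θ '' S = ⋃ i, θi i '' (S ∩ R i) :=
    calc θ '' S = ⋃ i, θ '' (S ∩ R i) := by
          rw [← image_iUnion, ← inter_iUnion, hcover, inter_univ]
      _ = ⋃ i, θi i '' (S ∩ R i) :=
          iUnion_congr fun i => image_congr fun x hx => hθ i x (hSR i hx)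
  rw [hS_eq, hθS]
  exact ⟨mul_measure_iUnion_le_measure_iUnion
      (fun i j hij => (hdisj hij).mono inter_subset_right inter_subset_right)
      (fun i => hS.inter (hR i)) fun i => (hpiece i).1,
    measure_iUnion_le_mul_measure_iUnion
      (fun i j hij => (hdisj hij).mono ((image_mono (hSR i)).trans (hmaps i).image_subset)
        ((image_mono (hSR j)).trans (hmaps j).image_subset))
      (fun i => himage i _ (hS.inter (hR i))) fun i => (hpiece i).2⟩

end

/-- gluing lemma. There are a universal constant `C > 0` and `ε₀ > 0`
such that for all `0 < ε < ε₀`: given a probability space `X`, a finite measurable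
partition `R_1, …, R_m`, a measurable set `A` of positive measure with
`|μ(R i) / μ_A(R i) - 1| < ε` for all `i`, and injective bi-measurable maps
`θ i : A ∩ R i → R i` such that the union of those atoms `R i` for which `θ i` is not
`ε`-measure preserving (w.r.t. `μ_{A ∩ R i}` and `μ_{R i}`) has measure `< ε`, the glued
map `θ : A → X` (with `θ = θ i` on `A ∩ R i`) is `C·ε`-measure preserving w.r.t. `μ_A`
and `μ`. Here `μ[|S]` denotes the normalized restriction of `μ` to `S`. -/
theorem glued_map_epsMeasurePreserving :
    ∃ C : ℝ, 0 < C ∧ ∃ ε₀ : ℝ, 0 < ε₀ ∧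
      ∀ ε : ℝ, 0 < ε → ε < ε₀ →
        ∀ (X : Type u) [MeasurableSpace X] (μ : Measure X), IsProbabilityMeasure μ →
          ∀ (m : ℕ) (R : Fin m → Set X),
            (∀ i, MeasurableSet (R i)) →
            Pairwise (Function.onFun Disjoint R) →
            (⋃ i, R i) = Set.univ →
            ∀ A : Set X, MeasurableSet A → 0 < μ A →
              (∀ i, 0 < (μ[|A]) (R i) ∧
                |(μ (R i)).toReal / ((μ[|A]) (R i)).toReal - 1| < ε) →
              ∀ θi : Fin m → X → X,
                (∀ i, Measurable (θi i)) →
                (∀ i, Set.InjOn (θi i) (A ∩ R i)) →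
                (∀ i, Set.MapsTo (θi i) (A ∩ R i) (R i)) →
                (∀ i (S : Set X), MeasurableSet S → MeasurableSet (θi i '' S)) →
                μ (⋃ i ∈ {i : Fin m |
                      ¬ EpsMeasurePreserving (μ[|A ∩ R i]) (μ[|R i]) (θi i) ε}, R i)
                  < ENNReal.ofReal ε →
                ∀ θ : X → X, (∀ i, ∀ x ∈ A ∩ R i, θ x = θi i x) →
                  EpsMeasurePreserving (μ[|A]) μ θ (C * ε) := by
  refine ⟨3, by norm_num, 1 / 3, by norm_num, ?_⟩
  intro ε hε hε₀ X _ μ _ m R hR hdisj hcover A hA _ hratio θi _ _ hmaps himage hbad θ hθ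
  refine EpsMeasurePreserving.glue hε.le hε₀.le hA hR hdisj hcover (fun i => ?_) hmaps himage
    hbad hθ
  exact ENNReal.ofReal_one_sub_mul_le_and_le_ofReal_one_add_mul (measure_ne_top _ _)
    (hratio i).1.ne' (measure_ne_top _ _) (hratio i).2
end

section
/- Let μ be a finite Borel measure on the interval I = (0, r₀), where r₀ > 0, and let λ > 1. Then the set { r ∈ I : ∑_{n=1}^∞ μ((r − λ^{-n}, r + λ^{-n})) < ∞ } has Lebesgue measure r₀, i.e. its complement in I has Lebesgue measure zero. -/
open MeasureTheory

/-- Let `μ` be a finite Borel measure on the interval `I = (0, r₀)`,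
`r₀ > 0`, and let `λ > 1`. Then the set of `r ∈ I` for which
`∑_{n ≥ 1} μ ((r - λ^{-n}, r + λ^{-n})) < ∞` has Lebesgue measure `r₀`. -/
theorem ae_summable_shrinking_intervals
    (r₀ : ℝ) (hr₀ : 0 < r₀) (μ : Measure ℝ) [IsFiniteMeasure μ]
    (lam : ℝ) (hlam : 1 < lam) :
    volume {r ∈ Set.Ioo (0 : ℝ) r₀ |
        ∑' n : ℕ, μ (Set.Ioo (r - lam ^ (-((n : ℤ) + 1))) (r + lam ^ (-((n : ℤ) + 1)))) < ⊤}
      = ENNReal.ofReal r₀ := by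
  have hlam0 : (0:ℝ) < lam := by linarith
  set c : ℕ → ℝ := fun n => lam ^ (-((n : ℤ) + 1)) with hc
  have hc_pos : ∀ n, 0 < c n := fun n => zpow_pos hlam0 _
  set f : ℝ → ENNReal := fun r => ∑' n : ℕ, μ (Set.Ioo (r - c n) (r + c n)) with hf
  have hmeas : ∀ n, Measurable fun r => μ (Set.Ioo (r - c n) (r + c n)) := by
    intro n
    have hS : MeasurableSet {p : ℝ × ℝ | p.1 - c n < p.2 ∧ p.2 < p.1 + c n} :=
      (measurableSet_lt (measurable_fst.sub measurable_const) measurable_snd).inter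
        (measurableSet_lt measurable_snd (measurable_fst.add measurable_const))
    exact measurable_measure_prodMk_left (ν := μ) hS
  have hmeasf : Measurable f := Measurable.ennreal_tsum hmeas
  have hterm : ∀ n, ∫⁻ r, μ (Set.Ioo (r - c n) (r + c n)) ≤
      ENNReal.ofReal (2 * c n) * μ Set.univ := by
    intro n
    have h1 : ∀ r, μ (Set.Ioo (r - c n) (r + c n)) =
        ∫⁻ s, (Set.Ioo (r - c n) (r + c n)).indicator (fun _ => 1) s ∂μ := by
      intro r
      rw [lintegral_indicator measurableSet_Ioo]
      simp
    calc ∫⁻ r, μ (Set.Ioo (r - c n) (r + c n))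
        = ∫⁻ r, ∫⁻ s, (Set.Ioo (r - c n) (r + c n)).indicator (fun _ => 1) s ∂μ ∂volume := by
          simp_rw [h1]
      _ = ∫⁻ s, ∫⁻ r, (Set.Ioo (r - c n) (r + c n)).indicator (fun _ => 1) s ∂volume ∂μ := by
          apply lintegral_lintegral_swap
          apply Measurable.aemeasurable
          have hS : MeasurableSet {p : ℝ × ℝ | p.1 - c n < p.2 ∧ p.2 < p.1 + c n} :=
            (measurableSet_lt (measurable_fst.sub measurable_const) measurable_snd).inter
              (measurableSet_lt measurable_snd (measurable_fst.add measurable_const))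
          have : (Function.uncurry fun r s =>
              (Set.Ioo (r - c n) (r + c n)).indicator (fun _ => (1:ENNReal)) s) =
              {p : ℝ × ℝ | p.1 - c n < p.2 ∧ p.2 < p.1 + c n}.indicator (fun _ => 1) := by
            ext p
            rcases p with ⟨r, s⟩
            by_cases hh : r - c n < s ∧ s < r + c n <;>
              simp [Function.uncurry, Set.indicator, Set.mem_Ioo, hh]
          rw [this]
          exact measurable_const.indicator hS
      _ ≤ ∫⁻ s, ENNReal.ofReal (2 * c n) ∂μ := by
          apply lintegral_mono
          intro s
          dsimp only
          have hfun : (fun r => (Set.Ioo (r - c n) (r + c n)).indicator (fun _ => (1:ENNReal)) s)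
              = (Set.Ioo (s - c n) (s + c n)).indicator (fun _ => 1) := by
            ext r
            have hiff : s ∈ Set.Ioo (r - c n) (r + c n) ↔ r ∈ Set.Ioo (s - c n) (s + c n) := by
              simp only [Set.mem_Ioo]; constructor <;> intro h <;> constructor <;> linarith [h.1, h.2]
            by_cases hh : r ∈ Set.Ioo (s - c n) (s + c n) <;>
              simp [Set.indicator, hiff, hh]
          have h2 : (∫⁻ r, (Set.Ioo (r - c n) (r + c n)).indicator (fun _ => (1:ENNReal)) s ∂volume)
              = volume (Set.Ioo (s - c n) (s + c n)) := by
            rw [hfun, lintegral_indicator measurableSet_Ioo]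
            simp
          rw [h2, Real.volume_Ioo]
          apply le_of_eq
          congr 1
          ring
      _ = ENNReal.ofReal (2 * c n) * μ Set.univ := lintegral_const _
  have hcval : ∀ n, c n = lam⁻¹ ^ (n + 1) := by
    intro n
    simp only [hc]
    rw [inv_pow, ← zpow_natCast lam (n+1), ← zpow_neg]
    push_cast
    ring_nf
  have hsum : Summable (fun n => 2 * c n) := by
    have he : (fun n : ℕ => 2 * c n) = fun n => (2 * lam⁻¹) * lam⁻¹ ^ n := by
      funext n
      rw [hcval, pow_succ]
      ring
    rw [he]
    exact (summable_geometric_of_lt_one (by positivity)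
      (inv_lt_one_of_one_lt₀ hlam)).mul_left _
  have hint : ∫⁻ r, f r ∂volume < ⊤ := by
    rw [hf]
    simp only
    rw [lintegral_tsum (fun n => (hmeas n).aemeasurable)]
    calc ∑' n, ∫⁻ r, μ (Set.Ioo (r - c n) (r + c n))
        ≤ ∑' n, ENNReal.ofReal (2 * c n) * μ Set.univ := ENNReal.tsum_le_tsum hterm
      _ = (∑' n, ENNReal.ofReal (2 * c n)) * μ Set.univ := ENNReal.tsum_mul_right
      _ < ⊤ := by
          apply ENNReal.mul_lt_top _ (measure_lt_top μ _)
          rw [← ENNReal.ofReal_tsum_of_nonneg (fun n => by positivity) hsum]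
          exact ENNReal.ofReal_lt_top
  have hae : ∀ᵐ r ∂volume, f r < ⊤ := ae_lt_top hmeasf hint.ne
  have heq : {r ∈ Set.Ioo (0:ℝ) r₀ | f r < ⊤} =ᵐ[volume] Set.Ioo (0:ℝ) r₀ := by
    filter_upwards [hae] with r hr
    simp only [Set.mem_setOf_eq, Set.mem_Ioo, eq_iff_iff]
    constructor
    · rintro ⟨h1, h2⟩; exact h1
    · intro h1; exact ⟨h1, hr⟩
  calc volume {r ∈ Set.Ioo (0:ℝ) r₀ | f r < ⊤} = volume (Set.Ioo (0:ℝ) r₀) :=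
        measure_congr heq
    _ = ENNReal.ofReal r₀ := by rw [Real.volume_Ioo, sub_zero]
end

section
/- Let (M, d) be a metric space, let μ be a finite Borel measure on M, let λ > 1, and let x ∈ M. Then for Lebesgue-almost every r > 0 one has ∑_{n=1}^∞ μ({ y ∈ M : r − λ^{-n} < d(x, y) < r + λ^{-n} }) < ∞. In particular, for every δ > 0 and every x ∈ M, the open ball B_r(x) is a (λ, μ)-regular set for Lebesgue-almost every r ∈ (0, δ). -/
open MeasureTheory Set

/-- A Borel set `A` is `(λ, μ)`-regular if `∑_{n ≥ 1} μ (∂_{λ^{-n}} A) < ∞`, where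
`∂_ρ A` is the open `ρ`-neighborhood of the topological frontier of `A`. -/
def LambdaMuRegular {M : Type*} [MetricSpace M] [MeasurableSpace M]
    (μ : Measure M) (lam : ℝ) (A : Set M) : Prop :=
  ∑' n : ℕ, μ (Metric.thickening (lam ^ (-((n : ℤ) + 1))) (frontier A)) < ⊤

/-! By Tonelli, `∫ μ {y | |f y - r| < ε} dr = 2ε μ(M)`, since each `y` lies in the
`ε`-annulus for a set of radii of length `2ε`. As `λ^{-n}` is summable, `r ↦ ∑ₙ μ {y | |f y - r| <
λ^{-n}}` has finite integral, hence is finite for a.e. `r`. For `f = dist x` it dominates the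
regularity series of `B_r(x)`, because the `ρ`-neighbourhood of the frontier of `B_r(x)` lies in
the `ρ`-annulus of radius `r`. -/

section Annuli

variable {α : Type*} [MeasurableSpace α] {f : α → ℝ}

lemma measurableSet_setOf_mem_Ioo_sub_add (hf : Measurable f) (ε : ℝ) :
    MeasurableSet {p : ℝ × α | f p.2 ∈ Ioo (p.1 - ε) (p.1 + ε)} :=
  (measurableSet_lt (measurable_fst.sub_const ε) (hf.comp measurable_snd)).inter
    (measurableSet_lt (hf.comp measurable_snd) (measurable_fst.add_const ε))

lemma measurable_measure_preimage_Ioo_sub_add (μ : Measure α) [SFinite μ]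
    (hf : Measurable f) (ε : ℝ) :
    Measurable fun r : ℝ => μ (f ⁻¹' Ioo (r - ε) (r + ε)) :=
  measurable_measure_prodMk_left (measurableSet_setOf_mem_Ioo_sub_add hf ε)

lemma lintegral_measure_preimage_Ioo_sub_add (μ : Measure α) [SFinite μ]
    (hf : Measurable f) (ε : ℝ) :
    ∫⁻ r, μ (f ⁻¹' Ioo (r - ε) (r + ε)) = ENNReal.ofReal (2 * ε) * μ univ := by
  have hs := measurableSet_setOf_mem_Ioo_sub_add hf ε
  have radii : ∀ y, (fun r : ℝ => (r, y)) ⁻¹' {p : ℝ × α | f p.2 ∈ Ioo (p.1 - ε) (p.1 + ε)}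
      = Ioo (f y - ε) (f y + ε) := by
    intro y
    ext r
    simp only [mem_preimage, mem_ofPred_eq, mem_Ioo]
    constructor <;> rintro ⟨h₁, h₂⟩ <;> constructor <;> linarith
  calc ∫⁻ r, μ (f ⁻¹' Ioo (r - ε) (r + ε))
      = (volume.prod μ) {p : ℝ × α | f p.2 ∈ Ioo (p.1 - ε) (p.1 + ε)} :=
        (Measure.prod_apply hs).symm
    _ = ∫⁻ y, volume (Ioo (f y - ε) (f y + ε)) ∂μ := by
        simp only [Measure.prod_apply_symm hs, radii]
    _ = ENNReal.ofReal (2 * ε) * μ univ := by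
        simp only [Real.volume_Ioo, show ∀ y, f y + ε - (f y - ε) = 2 * ε from
          fun y => by ring, lintegral_const]

lemma ae_tsum_measure_preimage_Ioo_sub_add_lt_top (μ : Measure α) [IsFiniteMeasure μ]
    (hf : Measurable f) {ε : ℕ → ℝ} (hε : Summable ε) :
    ∀ᵐ r, ∑' n, μ (f ⁻¹' Ioo (r - ε n) (r + ε n)) < ⊤ := by
  have hmeas n := measurable_measure_preimage_Ioo_sub_add μ hf (ε n)
  refine ae_lt_top (.tsum hmeas) ?_
  rw [lintegral_tsum fun n => (hmeas n).aemeasurable]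
  simp only [lintegral_measure_preimage_Ioo_sub_add μ hf, ENNReal.tsum_mul_right]
  exact ENNReal.mul_ne_top (hε.mul_left 2).tsum_ofReal_ne_top (measure_ne_top μ univ)

end Annuli

lemma summable_zpow_neg_natCast_add_one {lam : ℝ} (hlam : 1 < lam) :
    Summable fun n : ℕ => lam ^ (-((n : ℤ) + 1)) := by
  have hq : lam⁻¹ < 1 := inv_lt_one_of_one_lt₀ hlam
  refine ((summable_geometric_of_lt_one (by positivity) hq).mul_left lam⁻¹).congr fun n => ?_
  rw [← pow_succ', inv_pow, ← zpow_natCast, ← zpow_neg]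
  push_cast
  rfl

lemma Metric.thickening_frontier_ball_subset {M : Type*} [PseudoMetricSpace M]
    (x : M) (r ρ : ℝ) :
    Metric.thickening ρ (frontier (Metric.ball x r)) ⊆ dist x ⁻¹' Ioo (r - ρ) (r + ρ) := by
  intro y hy
  obtain ⟨z, hz, hyz⟩ := Metric.mem_thickening_iff.mp hy
  have hzr : dist z x = r := Metric.frontier_ball_subset_sphere hz
  have h := abs_le.mp (abs_dist_sub_le y z x)
  rw [hzr] at h
  rw [mem_preimage, mem_Ioo, dist_comm x y]
  constructor <;> linarith [h.1, h.2]

/-- Let `(M, d)` be a metric space, `μ` a finite Borel measure, `λ > 1`,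
`x ∈ M`. Then for Lebesgue-a.e. `r > 0`,
`∑_{n ≥ 1} μ {y | r - λ^{-n} < d(x, y) < r + λ^{-n}} < ∞`; in particular for every `δ > 0`
the ball `B_r(x)` is `(λ, μ)`-regular for Lebesgue-a.e. `r ∈ (0, δ)`. -/
theorem ae_radius_ball_lambdaMuRegular
    {M : Type*} [MetricSpace M] [MeasurableSpace M] [BorelSpace M]
    (μ : Measure M) [IsFiniteMeasure μ] (lam : ℝ) (hlam : 1 < lam) (x : M) :
    (∀ᵐ r ∂(volume.restrict (Set.Ioi (0 : ℝ))),
      ∑' n : ℕ, μ {y | r - lam ^ (-((n : ℤ) + 1)) < dist x y ∧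
          dist x y < r + lam ^ (-((n : ℤ) + 1))} < ⊤) ∧
    ∀ δ : ℝ, 0 < δ →
      ∀ᵐ r ∂(volume.restrict (Set.Ioo (0 : ℝ) δ)),
        LambdaMuRegular μ lam (Metric.ball x r) := by
  have hae := ae_tsum_measure_preimage_Ioo_sub_add_lt_top μ (f := dist x)
    (continuous_const.dist continuous_id).measurable (summable_zpow_neg_natCast_add_one hlam)
  refine ⟨ae_restrict_of_ae hae, fun δ _ => ?_⟩
  filter_upwards [ae_restrict_of_ae hae] with r hr
  exact (ENNReal.tsum_le_tsum fun n =>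
    measure_mono (Metric.thickening_frontier_ball_subset x r _)).trans_lt hr
end

section
/- Let (M, d) be a metric space, μ a finite Borel measure on M, λ > 1, and let U_1, …, U_k be open (λ, μ)-regular subsets of M. Then there exists a finite partition of the union U_1 ∪ ⋯ ∪ U_k into Borel sets, each of which is (λ, μ)-regular. (In fact, every nonempty atom of the Boolean algebra generated by U_1, …, U_k is (λ, μ)-regular, since its topological frontier is contained in the union of the frontiers of the U_i.) -/
open MeasureTheory

lemma frontier_iInter_subset' {M : Type*} [TopologicalSpace M] {k : ℕ} (S : Fin k → Set M) :
    frontier (⋂ j, S j) ⊆ ⋃ j, frontier (S j) := by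
  intro x hx
  obtain ⟨hc, hi⟩ := hx
  rw [interior_iInter_of_finite] at hi
  simp only [Set.mem_iInter, not_forall] at hi
  obtain ⟨j, hj⟩ := hi
  exact Set.mem_iUnion.2 ⟨j, closure_mono (Set.iInter_subset S j) hc, hj⟩

lemma frontier_iUnion_subset' {M : Type*} [TopologicalSpace M] {k : ℕ} (S : Fin k → Set M) :
    frontier (⋃ j, S j) ⊆ ⋃ j, frontier (S j) := by
  intro x hx
  obtain ⟨hc, hi⟩ := hx
  rw [closure_iUnion_of_finite] at hc
  obtain ⟨j, hj⟩ := Set.mem_iUnion.1 hc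
  refine Set.mem_iUnion.2 ⟨j, hj, fun hji => hi ?_⟩
  exact interior_mono (Set.subset_iUnion S j) hji

/-- If the frontier of `A` is contained in the union of the frontiers of finitely many
`(λ, μ)`-regular sets, then `A` is `(λ, μ)`-regular. -/
lemma lambdaMuRegular_of_frontier_subset {M : Type*} [MetricSpace M] [MeasurableSpace M]
    (μ : Measure M) (lam : ℝ) {k : ℕ} {U : Fin k → Set M} {A : Set M}
    (hsub : frontier A ⊆ ⋃ j, frontier (U j))
    (hUreg : ∀ j, LambdaMuRegular μ lam (U j)) : LambdaMuRegular μ lam A := by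
  unfold LambdaMuRegular at *
  calc ∑' n : ℕ, μ (Metric.thickening (lam ^ (-((n : ℤ) + 1))) (frontier A))
      ≤ ∑' n : ℕ, ∑ j, μ (Metric.thickening (lam ^ (-((n : ℤ) + 1))) (frontier (U j))) := by
        refine ENNReal.tsum_le_tsum fun n => ?_
        calc μ (Metric.thickening (lam ^ (-((n : ℤ) + 1))) (frontier A))
            ≤ μ (Metric.thickening (lam ^ (-((n : ℤ) + 1))) (⋃ j, frontier (U j))) :=
              measure_mono (Metric.thickening_subset_of_subset _ hsub)
          _ = μ (⋃ j, Metric.thickening (lam ^ (-((n : ℤ) + 1))) (frontier (U j))) := by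
              rw [Metric.thickening_iUnion]
          _ ≤ ∑ j, μ (Metric.thickening (lam ^ (-((n : ℤ) + 1))) (frontier (U j))) :=
              measure_iUnion_fintype_le _ _
    _ = ∑ j, ∑' n : ℕ, μ (Metric.thickening (lam ^ (-((n : ℤ) + 1))) (frontier (U j))) :=
        Summable.tsum_finsetSum fun j _ => ENNReal.summable
    _ < ⊤ := ENNReal.sum_lt_top.2 fun j _ => hUreg j

/-- If `U_1, …, U_k` are open `(λ, μ)`-regular subsets of a metric space
`M` carrying a finite Borel measure `μ`, then there is a finite partition of
`U_1 ∪ ⋯ ∪ U_k` into Borel sets, each of which is `(λ, μ)`-regular. -/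
theorem exists_lambdaMuRegular_partition_of_union
    {M : Type*} [MetricSpace M] [MeasurableSpace M] [BorelSpace M]
    (μ : Measure M) [IsFiniteMeasure μ] (lam : ℝ) (hlam : 1 < lam)
    (k : ℕ) (U : Fin k → Set M)
    (hUopen : ∀ j, IsOpen (U j))
    (hUreg : ∀ j, LambdaMuRegular μ lam (U j)) :
    ∃ (m : ℕ) (P : Fin m → Set M),
      (∀ i, MeasurableSet (P i)) ∧
      Pairwise (Function.onFun Disjoint P) ∧
      (⋃ i, P i) = (⋃ j, U j) ∧
      ∀ i, LambdaMuRegular μ lam (P i) := by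
  classical
  -- atoms indexed by boolean patterns
  set A : (Fin k → Bool) → Set M := fun f =>
    (⋃ j, U j) ∩ ⋂ j, (if f j then U j else (U j)ᶜ) with hA
  have e := (Fintype.equivFin (Fin k → Bool))
  refine ⟨Fintype.card (Fin k → Bool), fun i => A (e.symm i), ?_, ?_, ?_, ?_⟩
  · intro i
    exact ((MeasurableSet.iUnion fun j => (hUopen j).measurableSet).inter
      (MeasurableSet.iInter fun j => by
        split <;> [exact (hUopen j).measurableSet; exact (hUopen j).measurableSet.compl]))
  · intro i i' hne
    have hfg : e.symm i ≠ e.symm i' := fun h => hne (e.symm.injective h)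
    obtain ⟨j, hj⟩ := Function.ne_iff.1 hfg
    refine Set.disjoint_left.2 fun x hx hx' => ?_
    have h1 := Set.mem_iInter.1 hx.2 j
    have h2 := Set.mem_iInter.1 hx'.2 j
    cases hb : e.symm i j <;> cases hb' : e.symm i' j
    · exact hj (hb.trans hb'.symm)
    · rw [hb] at h1; rw [hb'] at h2; simp at h1 h2; exact h1 h2
    · rw [hb] at h1; rw [hb'] at h2; simp at h1 h2; exact h2 h1
    · exact hj (hb.trans hb'.symm)
  · apply Set.Subset.antisymm
    · exact Set.iUnion_subset fun i => Set.inter_subset_left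
    · intro x hx
      refine Set.mem_iUnion.2 ⟨e (fun j => decide (x ∈ U j)), ?_⟩
      rw [Equiv.symm_apply_apply]
      refine ⟨hx, Set.mem_iInter.2 fun j => ?_⟩
      by_cases hxj : x ∈ U j
      · simp [hxj]
      · simp [hxj]
  · intro i
    refine lambdaMuRegular_of_frontier_subset μ lam (U := U) ?_ hUreg
    have h1 : frontier (A (e.symm i)) ⊆
        frontier (⋃ j, U j) ∪ frontier (⋂ j, (if e.symm i j then U j else (U j)ᶜ)) := by
      intro x hx
      have := frontier_inter_subset (⋃ j, U j) (⋂ j, (if e.symm i j then U j else (U j)ᶜ)) hx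
      rcases this with h | h
      · exact Or.inl h.1
      · exact Or.inr h.2
    refine h1.trans (Set.union_subset (frontier_iUnion_subset' U) ?_)
    refine (frontier_iInter_subset' _).trans (Set.iUnion_mono fun j => ?_)
    split
    · exact subset_rfl
    · rw [frontier_compl]
end

section
/- Let (M, d) be a compact metric space, let f : M → M be a homeomorphism preserving a Borel probability measure μ, and let φ : M → ℝ be a Borel measurable μ-integrable function with φ(f(x)) = φ(x) for μ-a.e. x. Then there exists a Borel set N ⊂ M with μ(N) = 0 such that: (i) for all x, y ∈ M \ N with d(fⁿ(x), fⁿ(y)) → 0 as n → +∞, one has φ(x) = φ(y); and (ii) for all x, y ∈ M \ N with d(f^{-n}(x), f^{-n}(y)) → 0 as n → +∞, one has φ(x) = φ(y). -/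
/-!
Hopf's argument. Approximate `φ` in `L¹` by continuous functions `ψₖ` with `‖φ - ψₖ‖₁ ≤ 4⁻ᵏ`.
By the maximal ergodic inequality, the set `Bₖ` of points at which some Birkhoff average of
`|φ - ψₖ|` exceeds `2⁻ᵏ` has measure at most `2⁻ᵏ`, so by Borel–Cantelli almost every point lies
in only finitely many `Bₖ`. If `x, y` are such points, `φ` is constant along their orbits and
`d(Tⁿ x, Tⁿ y) → 0`, then the Birkhoff averages of the uniformly continuous `ψₖ` at `x` and `y`
merge, while they stay within `2⁻ᵏ` of `φ x` and `φ y`; hence `|φ x - φ y| ≤ 2 ⋅ 2⁻ᵏ` for all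
large `k`. Applying this to `f` and to `f⁻¹` gives both statements.
-/

open MeasureTheory Filter Set Topology

section BirkhoffMax

variable {α : Type*} (T : α → α) (h : α → ℝ)

def birkhoffMax (N : ℕ) : α → ℝ :=
  partialSups (birkhoffSum T h) N

lemma birkhoffMax_apply (N : ℕ) (x : α) :
    birkhoffMax T h N x = partialSups (birkhoffSum T h · x) N :=
  Pi.partialSups_apply _ _ _

lemma birkhoffMax_zero : birkhoffMax T h 0 = 0 := by
  simp [birkhoffMax, birkhoffSum_zero']

lemma monotone_birkhoffMax : Monotone (birkhoffMax T h) :=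
  partialSups_monotone _

lemma birkhoffSum_le_birkhoffMax {n N : ℕ} (hn : n ≤ N) (x : α) :
    birkhoffSum T h n x ≤ birkhoffMax T h N x :=
  le_partialSups_of_le (birkhoffSum T h) hn x

lemma birkhoffMax_nonneg (N : ℕ) (x : α) : 0 ≤ birkhoffMax T h N x := by
  simpa using birkhoffSum_le_birkhoffMax T h N.zero_le x

lemma birkhoffMax_pos_iff {N : ℕ} {x : α} :
    0 < birkhoffMax T h N x ↔ ∃ n ≤ N, 0 < birkhoffSum T h n x := by
  simp [birkhoffMax_apply, partialSups_eq_sup'_range, Finset.lt_sup'_iff]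

lemma birkhoffMax_succ (N : ℕ) (x : α) :
    birkhoffMax T h (N + 1) x = max 0 (h x + birkhoffMax T h N (T x)) := by
  refine le_antisymm ?_ (max_le (birkhoffMax_nonneg T h _ _) ?_)
  · rw [birkhoffMax_apply, partialSups_le_iff]
    rintro (_ | n) hn
    · simp
    · rw [birkhoffSum_succ']
      exact le_max_of_le_right (by gcongr; exact birkhoffSum_le_birkhoffMax T h (by omega) _)
  · rw [← le_sub_iff_add_le', birkhoffMax_apply, partialSups_le_iff]
    intro n hn
    rw [le_sub_iff_add_le', ← birkhoffSum_succ']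
    exact birkhoffSum_le_birkhoffMax T h (by omega) x

lemma birkhoffMax_sub_birkhoffMax_comp_le_indicator (N : ℕ) (x : α) :
    birkhoffMax T h N x - birkhoffMax T h N (T x) ≤
      {y | 0 < birkhoffMax T h N y}.indicator h x := by
  set E := {y | 0 < birkhoffMax T h N y}
  by_cases hx : x ∈ E
  · rw [indicator_of_mem hx, sub_le_iff_le_add']
    have := (monotone_birkhoffMax T h N.le_succ x).trans_eq (birkhoffMax_succ T h N x)
    linarith [(le_max_iff.1 this).resolve_left hx.not_ge]
  · rw [indicator_of_notMem hx]
    linarith [not_lt.1 (show ¬0 < birkhoffMax T h N x from hx), birkhoffMax_nonneg T h N (T x)]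

variable {T h} [MeasurableSpace α]

lemma Measurable.birkhoffMax (hT : Measurable T) (hh : Measurable h) (N : ℕ) :
    Measurable (birkhoffMax T h N) := by
  induction N with
  | zero => simpa [birkhoffMax_zero] using measurable_zero
  | succ N ih =>
    simp_rw [funext (birkhoffMax_succ T h N)]
    exact measurable_const.max (hh.add (ih.comp hT))

end BirkhoffMax

section BirkhoffAverage

variable {α : Type*} {T : α → α}

lemma lt_birkhoffAverage_iff_pos_birkhoffSum_sub {g : α → ℝ} {c : ℝ} (hc : 0 < c) {n : ℕ}
    {x : α} : c < birkhoffAverage ℝ T g n x ↔ 0 < birkhoffSum T (fun y => g y - c) n x := by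
  rcases n.eq_zero_or_pos with rfl | hn
  · simp [birkhoffAverage_zero, birkhoffSum_zero, hc.not_gt]
  · have hsub : birkhoffSum T (fun y => g y - c) n x = birkhoffSum T g n x - n * c := by
      simp [birkhoffSum, Finset.sum_sub_distrib]
    rw [hsub, sub_pos, birkhoffAverage, smul_eq_mul, lt_inv_mul_iff₀ (by exact_mod_cast hn)]

lemma abs_birkhoffAverage_le (g : α → ℝ) (n : ℕ) (x : α) :
    |birkhoffAverage ℝ T g n x| ≤ birkhoffAverage ℝ T (fun y => |g y|) n x := by
  simp only [birkhoffAverage, birkhoffSum, smul_eq_mul, abs_mul, abs_inv, Nat.abs_cast]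
  gcongr
  exact Finset.abs_sum_le_sum_abs _ _

lemma dist_birkhoffAverage_le_of_forall_iterate_eq {φ : α → ℝ} {x : α}
    (hφx : ∀ k, φ (T^[k] x) = φ x) (ψ : α → ℝ) {n : ℕ} (hn : n ≠ 0) :
    dist (φ x) (birkhoffAverage ℝ T ψ n x) ≤
      birkhoffAverage ℝ T (fun y => |φ y - ψ y|) n x := by
  have hφ : birkhoffAverage ℝ T φ n x = φ x := by
    simp [birkhoffAverage, birkhoffSum, hφx, hn]
  rw [Real.dist_eq, ← hφ]
  convert abs_birkhoffAverage_le (fun y => φ y - ψ y) n x using 2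
  simp [birkhoffAverage, birkhoffSum, Finset.sum_sub_distrib, mul_sub]

end BirkhoffAverage

section AsymptoticOrbits

variable {X : Type*} [PseudoMetricSpace X] {T : X → X} {x y : X}

lemma tendsto_dist_birkhoffAverage_birkhoffAverage {ψ : X → ℝ} (hψ : UniformContinuous ψ)
    (hxy : Tendsto (fun n => dist (T^[n] x) (T^[n] y)) atTop (𝓝 0)) :
    Tendsto (fun n => dist (birkhoffAverage ℝ T ψ n x) (birkhoffAverage ℝ T ψ n y))
      atTop (𝓝 0) := by
  have hψxy : Tendsto (fun k => dist (ψ (T^[k] x)) (ψ (T^[k] y))) atTop (𝓝 0) :=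
    tendsto_uniformity_iff_dist_tendsto_zero.1 <| Tendsto.comp hψ <|
      tendsto_uniformity_iff_dist_tendsto_zero (f := fun n => (T^[n] x, T^[n] y)) |>.2 hxy
  refine squeeze_zero (fun n => dist_nonneg)
    (fun n => dist_birkhoffAverage_birkhoffAverage_le ℝ T ψ n x y) ?_
  simpa [div_eq_inv_mul] using hψxy.cesaro

lemma abs_sub_le_of_birkhoffAverage_abs_sub_le {φ ψ : X → ℝ} (hψ : UniformContinuous ψ)
    (hxy : Tendsto (fun n => dist (T^[n] x) (T^[n] y)) atTop (𝓝 0))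
    (hφx : ∀ k, φ (T^[k] x) = φ x) (hφy : ∀ k, φ (T^[k] y) = φ y) {ε : ℝ}
    (hx : ∀ n, birkhoffAverage ℝ T (fun z => |φ z - ψ z|) n x ≤ ε)
    (hy : ∀ n, birkhoffAverage ℝ T (fun z => |φ z - ψ z|) n y ≤ ε) :
    |φ x - φ y| ≤ 2 * ε := by
  have hbound : ∀ᶠ n in atTop, |φ x - φ y| ≤
      2 * ε + dist (birkhoffAverage ℝ T ψ n x) (birkhoffAverage ℝ T ψ n y) := by
    filter_upwards [eventually_ne_atTop 0] with n hn
    have := dist_triangle4 (φ x) (birkhoffAverage ℝ T ψ n x) (birkhoffAverage ℝ T ψ n y) (φ y)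
    rw [dist_comm (birkhoffAverage ℝ T ψ n y)] at this
    linarith [Real.dist_eq (φ x) (φ y),
      (dist_birkhoffAverage_le_of_forall_iterate_eq hφx ψ hn).trans (hx n),
      (dist_birkhoffAverage_le_of_forall_iterate_eq hφy ψ hn).trans (hy n)]
  simpa using ge_of_tendsto
    ((tendsto_dist_birkhoffAverage_birkhoffAverage hψ hxy).const_add (2 * ε)) hbound

end AsymptoticOrbits

namespace MeasureTheory

lemma Measure.QuasiMeasurePreserving.ae_forall_iterate_eq {α β : Type*} [MeasurableSpace α]
    {μ : Measure α} {T : α → α} (hT : QuasiMeasurePreserving T μ μ) {φ : α → β}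
    (hφT : ∀ᵐ x ∂μ, φ (T x) = φ x) : ∀ᵐ x ∂μ, ∀ n, φ (T^[n] x) = φ x := by
  refine ae_all_iff.2 fun n => ?_
  induction n with
  | zero => simp
  | succ n ih =>
    filter_upwards [hT.ae ih, hφT] with x hTx hx
    rw [Function.iterate_succ_apply, hTx, hx]

namespace MeasurePreserving

section MaximalErgodic

variable {α : Type*} [MeasurableSpace α] {μ : Measure α} {T : α → α} {g h : α → ℝ}

lemma integrable_birkhoffMax (hT : MeasurePreserving T μ μ) (hhi : Integrable h μ) (N : ℕ) :
    Integrable (birkhoffMax T h N) μ := by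
  induction N with
  | zero => simp [birkhoffMax_zero]
  | succ N ih =>
    simp_rw [funext (birkhoffMax_succ T h N)]
    exact (integrable_zero α ℝ μ).sup (hhi.add (hT.integrable_comp_of_integrable ih))

/-- Garsia's form of the maximal ergodic lemma. -/
theorem setIntegral_birkhoffMax_pos_nonneg (hT : MeasurePreserving T μ μ) (hh : Measurable h)
    (hhi : Integrable h μ) (N : ℕ) :
    0 ≤ ∫ x in {x | 0 < birkhoffMax T h N x}, h x ∂μ := by
  have hM := hT.integrable_birkhoffMax hhi N
  have hMT : Integrable (fun x => birkhoffMax T h N (T x)) μ :=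
    hT.integrable_comp_of_integrable hM
  have hMm := hT.measurable.birkhoffMax hh N
  have hE : MeasurableSet {x | 0 < birkhoffMax T h N x} := measurableSet_lt measurable_const hMm
  have hMT_eq : ∫ x, birkhoffMax T h N (T x) ∂μ = ∫ x, birkhoffMax T h N x ∂μ := by
    rw [← integral_map hT.aemeasurable hMm.aestronglyMeasurable, hT.map_eq]
  calc 0 = ∫ x, (birkhoffMax T h N x - birkhoffMax T h N (T x)) ∂μ := by
        rw [integral_sub hM hMT, hMT_eq, sub_self]
    _ ≤ ∫ x, {x | 0 < birkhoffMax T h N x}.indicator h x ∂μ :=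
        integral_mono (hM.sub hMT) (hhi.indicator hE)
          (birkhoffMax_sub_birkhoffMax_comp_le_indicator T h N)
    _ = _ := integral_indicator hE

theorem measure_exists_lt_birkhoffAverage_le [IsFiniteMeasure μ] (hT : MeasurePreserving T μ μ)
    (hg : Measurable g) (hgi : Integrable g μ) {c : ℝ} (hc : 0 < c) :
    μ {x | ∃ n, c < birkhoffAverage ℝ T g n x} ≤ ENNReal.ofReal ((∫ x, |g x| ∂μ) / c) := by
  set E : ℕ → Set α := fun N => {x | 0 < birkhoffMax T (fun y => g y - c) N x}
  have hunion : {x | ∃ n, c < birkhoffAverage ℝ T g n x} = ⋃ N, E N := by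
    ext x
    simp only [mem_ofPred_eq, mem_iUnion, E, birkhoffMax_pos_iff,
      lt_birkhoffAverage_iff_pos_birkhoffSum_sub hc]
    exact ⟨fun ⟨n, hn⟩ => ⟨n, n, le_rfl, hn⟩, fun ⟨_, n, _, hn⟩ => ⟨n, hn⟩⟩
  have hmono : Monotone E := fun _ _ hNM _ hx => hx.trans_le (monotone_birkhoffMax _ _ hNM _)
  rw [hunion, hmono.measure_iUnion]
  refine iSup_le fun N => ?_
  have hgarsia := hT.setIntegral_birkhoffMax_pos_nonneg (h := fun y => g y - c)
    (hg.sub measurable_const) (hgi.sub (integrable_const c)) N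
  rw [integral_sub hgi.integrableOn (integrableOn_const (measure_ne_top μ _)),
    setIntegral_const, smul_eq_mul, measureReal_def] at hgarsia
  have hle : ∫ x in E N, g x ∂μ ≤ ∫ x, |g x| ∂μ :=
    (integral_mono hgi.integrableOn hgi.abs.integrableOn fun x => le_abs_self _).trans
      (setIntegral_le_integral hgi.abs (Eventually.of_forall fun x => abs_nonneg _))
  rw [ENNReal.le_ofReal_iff_toReal_le (measure_ne_top μ _)
    (div_nonneg (integral_nonneg fun x => abs_nonneg _) hc.le), le_div_iff₀ hc]
  linarith

end MaximalErgodic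

variable {X : Type*} [PseudoMetricSpace X] [CompactSpace X] [MeasurableSpace X] [BorelSpace X]
  {μ : Measure X} [IsFiniteMeasure μ] {T : X → X} {φ : X → ℝ}

theorem exists_null_forall_eq_of_tendsto_dist_iterate (hT : MeasurePreserving T μ μ)
    (hφ : Measurable φ) (hφi : Integrable φ μ) (hφT : ∀ᵐ x ∂μ, φ (T x) = φ x) :
    ∃ N : Set X, MeasurableSet N ∧ μ N = 0 ∧ ∀ x y, x ∉ N → y ∉ N →
      Tendsto (fun n => dist (T^[n] x) (T^[n] y)) atTop (𝓝 0) → φ x = φ y := by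
  choose ψ hψφ hψi using fun k : ℕ =>
    hφi.exists_boundedContinuous_integral_sub_le (ε := (2⁻¹ ^ k) ^ 2) (by positivity)
  set B : ℕ → Set X := fun k =>
    {x | ∃ n, 2⁻¹ ^ k < birkhoffAverage ℝ T (fun z => |φ z - ψ k z|) n x}
  have hB : ∀ k, μ (B k) ≤ ENNReal.ofReal (2⁻¹ ^ k) := fun k =>
    (hT.measure_exists_lt_birkhoffAverage_le (hφ.sub (ψ k).continuous.measurable).abs
      (hφi.sub (hψi k)).abs (by positivity)).trans <| ENNReal.ofReal_le_ofReal <| by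
        rw [div_le_iff₀ (by positivity), ← sq]
        simpa [Real.norm_eq_abs] using hψφ k
  have hBsum : ∑' k, μ (B k) ≠ ⊤ := by
    refine ne_top_of_le_ne_top ?_ (ENNReal.tsum_le_tsum hB)
    rw [← ENNReal.ofReal_tsum_of_nonneg (fun k => by positivity)
      (summable_geometric_of_lt_one (by norm_num) (by norm_num))]
    exact ENNReal.ofReal_ne_top
  obtain ⟨G, hG, hGm, hgood⟩ := ((ae_eventually_notMem hBsum).and
    (hT.quasiMeasurePreserving.ae_forall_iterate_eq hφT)).exists_measurable_mem
  refine ⟨Gᶜ, hGm.compl, hG, fun x y hx hy hxy => ?_⟩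
  obtain ⟨hxB, hφx⟩ := hgood x (not_not.1 hx)
  obtain ⟨hyB, hφy⟩ := hgood y (not_not.1 hy)
  have hclose : ∀ᶠ k in atTop, |φ x - φ y| ≤ 2 * 2⁻¹ ^ k := by
    filter_upwards [hxB, hyB] with k hxk hyk
    simp only [B, mem_ofPred_eq, not_exists, not_lt] at hxk hyk
    exact abs_sub_le_of_birkhoffAverage_abs_sub_le
      (CompactSpace.uniformContinuous_of_continuous (ψ k).continuous) hxy hφx hφy hxk hyk
  have hlim : Tendsto (fun k : ℕ => 2 * (2⁻¹ : ℝ) ^ k) atTop (𝓝 0) := by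
    simpa using (tendsto_pow_atTop_nhds_zero_of_lt_one (r := (2⁻¹ : ℝ))
      (by norm_num) (by norm_num)).const_mul 2
  exact sub_eq_zero.1 (abs_nonpos_iff.1 (ge_of_tendsto hlim hclose))

end MeasurePreserving

end MeasureTheory

/-- Let `(M, d)` be a compact metric space, `f : M → M` a homeomorphism
preserving a Borel probability measure `μ`, and `φ : M → ℝ` a Borel measurable
`μ`-integrable function with `φ ∘ f = φ` a.e. Then there is a Borel set `N` of measure
zero such that: (i) if `x, y ∉ N` and `d(fⁿ x, fⁿ y) → 0` as `n → ∞`, then `φ x = φ y`;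
and (ii) if `x, y ∉ N` and `d(f⁻ⁿ x, f⁻ⁿ y) → 0` as `n → ∞`, then `φ x = φ y`. -/
theorem invariant_function_constant_on_stable_sets
    {M : Type*} [MetricSpace M] [CompactSpace M] [MeasurableSpace M] [BorelSpace M]
    (μ : Measure M) [IsProbabilityMeasure μ]
    (f : M ≃ₜ M) (hf : MeasurePreserving f μ μ)
    (φ : M → ℝ) (hφmeas : Measurable φ) (hφint : Integrable φ μ)
    (hφinv : ∀ᵐ x ∂μ, φ (f x) = φ x) :
    ∃ N : Set M, MeasurableSet N ∧ μ N = 0 ∧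
      (∀ x y : M, x ∉ N → y ∉ N →
        Filter.Tendsto (fun n => dist ((⇑f)^[n] x) ((⇑f)^[n] y)) Filter.atTop (nhds 0) →
        φ x = φ y) ∧
      (∀ x y : M, x ∉ N → y ∉ N →
        Filter.Tendsto (fun n => dist ((⇑f.symm)^[n] x) ((⇑f.symm)^[n] y))
          Filter.atTop (nhds 0) →
        φ x = φ y) := by
  have hf_symm : MeasurePreserving f.symm μ μ :=
    MeasurePreserving.symm f.toMeasurableEquiv hf
  have hφinv_symm : ∀ᵐ x ∂μ, φ (f.symm x) = φ x := by
    filter_upwards [hf_symm.quasiMeasurePreserving.ae hφinv] with x hx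
    rw [← hx, f.apply_symm_apply]
  obtain ⟨N₁, hN₁, hμN₁, hstable⟩ :=
    hf.exists_null_forall_eq_of_tendsto_dist_iterate hφmeas hφint hφinv
  obtain ⟨N₂, hN₂, hμN₂, hunstable⟩ :=
    hf_symm.exists_null_forall_eq_of_tendsto_dist_iterate hφmeas hφint hφinv_symm
  refine ⟨N₁ ∪ N₂, hN₁.union hN₂, measure_union_null hμN₁ hμN₂, ?_, ?_⟩
  · exact fun x y hx hy => hstable x y (notMem_subset subset_union_left hx)
      (notMem_subset subset_union_left hy)
  · exact fun x y hx hy => hunstable x y (notMem_subset subset_union_right hx)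
      (notMem_subset subset_union_right hy)
end
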